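/- arXiv:1610.08191 — 2 statements merged into one kernel-verified Lean document; each statement's English description precedes it below -/
import Mathlib

section
/- Let F : T → S and G : S → T be an adjoint pair of triangle functors between triangulated categories. If the counit ε : FG → Id_S is a natural isomorphism and for every object Y of T one has F(Y) ≅ 0 if and only if Y ≅ 0, then F and G are mutually inverse equivalences between T and S. -/
open CategoryTheory CategoryTheory.Limits CategoryTheory.Pretriangulated

/-- Let `F : T ⥤ S` and `G : S ⥤ T` be an adjoint pair of triangle
functors between triangulated categories.  If the counit `ε : F ⋙ G ⟶ 𝟭 S` is a
natural isomorphism and, for every object `Y` of `T`, `F.obj Y ≅ 0` iff `Y ≅ 0`,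
then `F` and `G` are mutually inverse equivalences between `T` and `S`
(i.e. both the unit and the counit of the adjunction are isomorphisms, so that
`F` and `G` are quasi-inverse equivalences). -/
theorem stmt1
    {T : Type*} [Category T] [HasZeroObject T] [HasShift T ℤ]
    [Preadditive T] [∀ n : ℤ, (shiftFunctor T n).Additive] [Pretriangulated T]
    [IsTriangulated T]
    {S : Type*} [Category S] [HasZeroObject S] [HasShift S ℤ]
    [Preadditive S] [∀ n : ℤ, (shiftFunctor S n).Additive] [Pretriangulated S]
    [IsTriangulated S]
    (F : T ⥤ S) (G : S ⥤ T) [F.CommShift ℤ] [G.CommShift ℤ]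
    [F.IsTriangulated] [G.IsTriangulated]
    (adj : F ⊣ G)
    (hcounit : IsIso adj.counit)
    (hF : ∀ Y : T, IsZero (F.obj Y) ↔ IsZero Y) :
    IsIso adj.unit ∧ F.IsEquivalence ∧ G.IsEquivalence := by
  -- F reflects isomorphisms
  have hcons : ∀ {X Y : T} (f : X ⟶ Y), IsIso (F.map f) → IsIso f := by
    intro X Y f hf
    obtain ⟨Z, g, h, hT⟩ := Pretriangulated.distinguished_cocone_triangle f
    have hFT := F.map_distinguished _ hT
    have hz : IsZero (F.obj Z) := by
      have := (Triangle.isZero₃_iff_isIso₁ _ hFT).2 hf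
      exact this
    exact (Triangle.isZero₃_iff_isIso₁ _ hT).1 ((hF Z).1 hz)
  -- the unit is an isomorphism
  have hunit : IsIso adj.unit := by
    have : ∀ X : T, IsIso (adj.unit.app X) := by
      intro X
      apply hcons
      have : F.map (adj.unit.app X) ≫ adj.counit.app (F.obj X) = 𝟙 _ :=
        adj.left_triangle_components X
      have hc : IsIso (adj.counit.app (F.obj X)) := inferInstance
      exact IsIso.of_isIso_fac_right this
    exact NatIso.isIso_of_isIso_app adj.unit
  refine ⟨hunit, ?_, ?_⟩
  · exact adj.toEquivalence.isEquivalence_functor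
  · exact adj.toEquivalence.isEquivalence_inverse
end

section
/- Let F : T → T' be a triangle functor between triangulated categories and T an object of T. If the induced map F : Hom_T(T, T[n]) → Hom_{T'}(F(T), F(T)[n]) is an isomorphism for every integer n, then the restriction of F to the smallest thick subcategory thick_T(T) of T containing T is fully faithful. -/
/-!
For fixed `X`, call `Y` good if `F` is bijective on `Hom(X⟦a⟧, Y⟦b⟧)` for all `a b : ℤ`.
Good objects are closed under isomorphisms, shifts, zero objects and retracts, and under
cones by the five lemma, applied to the long exact `Hom` sequences of a distinguished
triangle and of its image under `F`; symmetrically in the first variable. The hypothesis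
says that `T` is good for `T`, so induction over the thick closure, first in `Y` and then
in `X`, makes every pair of objects of `thick(T)` good; take `a = b = 0`.
-/

open CategoryTheory CategoryTheory.Limits CategoryTheory.Pretriangulated

variable {C : Type*} [Category C] [HasZeroObject C] [HasShift C ℤ]
  [Preadditive C] [∀ n : ℤ, (shiftFunctor C n).Additive] [Pretriangulated C]

/-- The smallest thick subcategory of a (pre)triangulated category containing a
class `S` of objects. -/
inductive thickClosure (S : Set C) : C → Prop
  | base {X : C} : X ∈ S → thickClosure S X
  | zero {X : C} : IsZero X → thickClosure S X
  | iso {X Y : C} : (X ≅ Y) → thickClosure S X → thickClosure S Y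
  | shift {X : C} (n : ℤ) : thickClosure S X → thickClosure S (X⟦n⟧)
  | cone {Tr : Triangle C} : (Tr ∈ distTriang C) → thickClosure S Tr.obj₁ →
      thickClosure S Tr.obj₂ → thickClosure S Tr.obj₃
  | summand {X Y : C} : thickClosure S X →
      (∃ (s : Y ⟶ X) (r : X ⟶ Y), s ≫ r = 𝟙 Y) → thickClosure S Y

namespace CategoryTheory.Functor

section

variable {𝒞 𝒟 : Type*} [Category 𝒞] [Category 𝒟]

def HomBijective (G : 𝒞 ⥤ 𝒟) (X Y : 𝒞) : Prop :=
  Function.Bijective (G.map : (X ⟶ Y) → (G.obj X ⟶ G.obj Y))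

variable {G : 𝒞 ⥤ 𝒟}

lemma injective_map_iff [Preadditive 𝒞] [Preadditive 𝒟] [G.Additive] {X Y : 𝒞} :
    Function.Injective (G.map : (X ⟶ Y) → (G.obj X ⟶ G.obj Y)) ↔
      ∀ f : X ⟶ Y, G.map f = 0 → f = 0 :=
  injective_iff_map_eq_zero G.mapAddHom

namespace HomBijective

lemma of_retract_left {X X' Y : 𝒞} (e : Retract X' X) (h : G.HomBijective X Y) :
    G.HomBijective X' Y := by
  constructor
  · intro f g hfg
    have : e.r ≫ f = e.r ≫ g := h.1 (by simp only [G.map_comp, hfg])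
    simpa using e.i ≫= this
  · intro φ
    obtain ⟨f, hf⟩ := h.2 (G.map e.r ≫ φ)
    refine ⟨e.i ≫ f, ?_⟩
    rw [G.map_comp, hf, ← G.map_comp_assoc, e.retract, G.map_id, Category.id_comp]

lemma of_retract_right {X Y Y' : 𝒞} (e : Retract Y' Y) (h : G.HomBijective X Y) :
    G.HomBijective X Y' := by
  constructor
  · intro f g hfg
    have : f ≫ e.i = g ≫ e.i := h.1 (by simp only [G.map_comp, hfg])
    simpa using this =≫ e.r
  · intro φ
    obtain ⟨f, hf⟩ := h.2 (φ ≫ G.map e.i)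
    refine ⟨f ≫ e.r, ?_⟩
    rw [G.map_comp, hf, Category.assoc, ← G.map_comp, e.retract, G.map_id, Category.comp_id]

lemma of_iso_left {X X' Y : 𝒞} (e : X ≅ X') (h : G.HomBijective X Y) : G.HomBijective X' Y :=
  h.of_retract_left e.symm.retract

lemma of_iso_right {X Y Y' : 𝒞} (e : Y ≅ Y') (h : G.HomBijective X Y) : G.HomBijective X Y' :=
  h.of_retract_right e.symm.retract

section

variable [HasZeroMorphisms 𝒞] [HasZeroMorphisms 𝒟] [G.PreservesZeroMorphisms]

lemma of_isZero_left {X Y : 𝒞} (hX : IsZero X) : G.HomBijective X Y :=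
  ⟨fun f g _ => hX.eq_of_src f g, fun _ => ⟨0, (G.map_isZero hX).eq_of_src _ _⟩⟩

lemma of_isZero_right {X Y : 𝒞} (hY : IsZero Y) : G.HomBijective X Y :=
  ⟨fun f g _ => hY.eq_of_tgt f g, fun _ => ⟨0, (G.map_isZero hY).eq_of_tgt _ _⟩⟩

end

lemma shift {M : Type*} [AddGroup M] [HasShift 𝒞 M] [HasShift 𝒟 M] [G.CommShift M]
    {X Y : 𝒞} (h : G.HomBijective X Y) (n : M) : G.HomBijective (X⟦n⟧) (Y⟦n⟧) := by
  have hcomm : G.map ∘ (shiftFunctor 𝒞 n).map (X := X) (Y := Y) =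
      ((G.commShiftIso n).app X).symm.homCongr ((G.commShiftIso n).app Y).symm ∘
        (shiftFunctor 𝒟 n).map ∘ G.map := by
    ext f
    simp
  rw [HomBijective, ← Function.Bijective.of_comp_iff _
    ((FullyFaithful.ofFullyFaithful (shiftFunctor 𝒞 n)).map_bijective X Y), hcomm]
  exact (Iso.homCongr _ _).bijective.comp
    (((FullyFaithful.ofFullyFaithful (shiftFunctor 𝒟 n)).map_bijective _ _).comp h)

end HomBijective

end

section

variable {𝒞 𝒟 : Type*} [Category 𝒞] [Category 𝒟] [HasShift 𝒞 ℤ]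

def ShiftedHomBijective (G : 𝒞 ⥤ 𝒟) (X Y : 𝒞) : Prop :=
  ∀ a b : ℤ, G.HomBijective (X⟦a⟧) (Y⟦b⟧)

variable {G : 𝒞 ⥤ 𝒟}

namespace ShiftedHomBijective

lemma homBijective {X Y : 𝒞} (h : G.ShiftedHomBijective X Y) : G.HomBijective X Y :=
  ((h 0 0).of_iso_left ((shiftFunctorZero 𝒞 ℤ).app X)).of_iso_right
    ((shiftFunctorZero 𝒞 ℤ).app Y)

lemma of_retract_left {X X' Y : 𝒞} (e : Retract X' X) (h : G.ShiftedHomBijective X Y) :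
    G.ShiftedHomBijective X' Y :=
  fun a b => (h a b).of_retract_left (e.map _)

lemma of_retract_right {X Y Y' : 𝒞} (e : Retract Y' Y) (h : G.ShiftedHomBijective X Y) :
    G.ShiftedHomBijective X Y' :=
  fun a b => (h a b).of_retract_right (e.map _)

lemma of_iso_left {X X' Y : 𝒞} (e : X ≅ X') (h : G.ShiftedHomBijective X Y) :
    G.ShiftedHomBijective X' Y :=
  h.of_retract_left e.symm.retract

lemma of_iso_right {X Y Y' : 𝒞} (e : Y ≅ Y') (h : G.ShiftedHomBijective X Y) :
    G.ShiftedHomBijective X Y' :=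
  h.of_retract_right e.symm.retract

lemma shift_left {X Y : 𝒞} (h : G.ShiftedHomBijective X Y) (n : ℤ) :
    G.ShiftedHomBijective (X⟦n⟧) Y :=
  fun a b => (h (n + a) b).of_iso_left ((shiftFunctorAdd 𝒞 n a).app X)

lemma shift_right {X Y : 𝒞} (h : G.ShiftedHomBijective X Y) (n : ℤ) :
    G.ShiftedHomBijective X (Y⟦n⟧) :=
  fun a b => (h a (n + b)).of_iso_right ((shiftFunctorAdd 𝒞 n b).app Y)

section

variable [HasZeroMorphisms 𝒞] [HasZeroMorphisms 𝒟] [G.PreservesZeroMorphisms]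

lemma of_isZero_left {X Y : 𝒞} (hX : IsZero X) : G.ShiftedHomBijective X Y :=
  fun a _ => .of_isZero_left ((shiftFunctor 𝒞 a).map_isZero hX)

lemma of_isZero_right {X Y : 𝒞} (hY : IsZero Y) : G.ShiftedHomBijective X Y :=
  fun _ b => .of_isZero_right ((shiftFunctor 𝒞 b).map_isZero hY)

end

end ShiftedHomBijective

lemma shiftedHomBijective_self [HasShift 𝒟 ℤ] [G.CommShift ℤ] {T : 𝒞}
    (h : ∀ n : ℤ, Function.Bijective
      (fun f : T ⟶ T⟦n⟧ => G.map f ≫ (G.commShiftIso n).hom.app T)) :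
    G.ShiftedHomBijective T T := by
  have hT (n : ℤ) : G.HomBijective T (T⟦n⟧) := by
    refine (Function.Bijective.of_comp_iff'
      (Iso.homCongr (Iso.refl _) ((G.commShiftIso n).app T)).bijective _).1 ?_
    convert h n using 1
    ext f
    simp
  intro a b
  exact ((hT (b - a)).shift a).of_iso_right
    ((shiftFunctorAdd' 𝒞 (b - a) a b (by abel)).app T).symm

end

section

variable {D : Type*} [Category D] [HasZeroObject D] [HasShift D ℤ]
  [Preadditive D] [∀ n : ℤ, (shiftFunctor D n).Additive] [Pretriangulated D]
  {F : C ⥤ D} [F.CommShift ℤ] [F.IsTriangulated]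

section

variable (F)

lemma map_coyoneda_exact₂ (Tr : Triangle C) (hTr : Tr ∈ distTriang C) {A : D}
    (f : A ⟶ F.obj Tr.obj₂) (hf : f ≫ F.map Tr.mor₂ = 0) :
    ∃ g, f = g ≫ F.map Tr.mor₁ :=
  Triangle.coyoneda_exact₂ _ (F.map_distinguished Tr hTr) f hf

lemma map_coyoneda_exact₃ (Tr : Triangle C) (hTr : Tr ∈ distTriang C) {A : D}
    (f : A ⟶ F.obj Tr.obj₃) (hf : f ≫ F.map Tr.mor₃ = 0) :
    ∃ g, f = g ≫ F.map Tr.mor₂ :=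
  F.map_coyoneda_exact₂ _ (rot_of_distTriang Tr hTr) f hf

lemma map_yoneda_exact₃ (Tr : Triangle C) (hTr : Tr ∈ distTriang C) {B : D}
    (f : F.obj Tr.obj₃ ⟶ B) (hf : F.map Tr.mor₂ ≫ f = 0) :
    ∃ g, f = F.map Tr.mor₃ ≫ g :=
  Triangle.yoneda_exact₂ _ (F.map_distinguished _ (rot_of_distTriang Tr hTr)) f hf

lemma map_yoneda_exact₁ (Tr : Triangle C) (hTr : Tr ∈ distTriang C) {B : D}
    (f : F.obj (Tr.obj₁⟦(1 : ℤ)⟧) ⟶ B) (hf : F.map Tr.mor₃ ≫ f = 0) :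
    ∃ g, f = F.map (Tr.mor₁⟦(1 : ℤ)⟧') ≫ g := by
  obtain ⟨g, hg⟩ : ∃ g : F.obj (Tr.obj₂⟦(1 : ℤ)⟧) ⟶ B, f = F.map (-Tr.mor₁⟦(1 : ℤ)⟧') ≫ g :=
    F.map_yoneda_exact₃ _ (rot_of_distTriang Tr hTr) f hf
  exact ⟨-g, by rw [hg, F.map_neg, Preadditive.neg_comp, Preadditive.comp_neg]⟩

end

lemma injective_map_to_obj₃ (Tr : Triangle C) (hTr : Tr ∈ distTriang C) (A : C)
    (h₁ : Function.Surjective (F.map : (A ⟶ Tr.obj₁) → _))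
    (h₂ : Function.Injective (F.map : (A ⟶ Tr.obj₂) → _))
    (h₁' : Function.Injective (F.map : (A ⟶ Tr.obj₁⟦(1 : ℤ)⟧) → _)) :
    Function.Injective (F.map : (A ⟶ Tr.obj₃) → _) := by
  refine injective_map_iff.2 fun d hd => ?_
  obtain ⟨e, rfl⟩ := Triangle.coyoneda_exact₃ Tr hTr d
    (injective_map_iff.1 h₁' _ (by rw [F.map_comp, hd, zero_comp]))
  obtain ⟨ξ, hξ⟩ := F.map_coyoneda_exact₂ Tr hTr (F.map e) (by rw [← F.map_comp, hd])
  obtain ⟨η, rfl⟩ := h₁ ξ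
  obtain rfl : e = η ≫ Tr.mor₁ := h₂ (by rw [hξ, F.map_comp])
  rw [Category.assoc, comp_distTriang_mor_zero₁₂ Tr hTr, comp_zero]

lemma surjective_map_to_obj₃ (Tr : Triangle C) (hTr : Tr ∈ distTriang C) (A : C)
    (h₂ : Function.Surjective (F.map : (A ⟶ Tr.obj₂) → _))
    (h₁' : Function.Surjective (F.map : (A ⟶ Tr.obj₁⟦(1 : ℤ)⟧) → _))
    (h₂' : Function.Injective (F.map : (A ⟶ Tr.obj₂⟦(1 : ℤ)⟧) → _)) :
    Function.Surjective (F.map : (A ⟶ Tr.obj₃) → _) := by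
  intro φ
  obtain ⟨u, hu⟩ := h₁' (φ ≫ F.map Tr.mor₃)
  obtain ⟨v, rfl⟩ := Triangle.coyoneda_exact₁ Tr hTr u (injective_map_iff.1 h₂' _ (by
    rw [F.map_comp, hu, Category.assoc, ← F.map_comp, comp_distTriang_mor_zero₃₁ Tr hTr,
      F.map_zero, comp_zero]))
  obtain ⟨w, hw⟩ := F.map_coyoneda_exact₃ Tr hTr (φ - F.map v)
    (by rw [Preadditive.sub_comp, ← F.map_comp, ← hu, sub_self])
  obtain ⟨t, rfl⟩ := h₂ w
  exact ⟨v + t ≫ Tr.mor₂, by rw [F.map_add, F.map_comp, ← hw]; abel⟩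

lemma injective_map_from_obj₃ (Tr : Triangle C) (hTr : Tr ∈ distTriang C) (B : C)
    (h₂ : Function.Injective (F.map : (Tr.obj₂ ⟶ B) → _))
    (h₁' : Function.Injective (F.map : (Tr.obj₁⟦(1 : ℤ)⟧ ⟶ B) → _))
    (h₂' : Function.Surjective (F.map : (Tr.obj₂⟦(1 : ℤ)⟧ ⟶ B) → _)) :
    Function.Injective (F.map : (Tr.obj₃ ⟶ B) → _) := by
  refine injective_map_iff.2 fun d hd => ?_
  obtain ⟨e, rfl⟩ := Triangle.yoneda_exact₃ Tr hTr d
    (injective_map_iff.1 h₂ _ (by rw [F.map_comp, hd, comp_zero]))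
  obtain ⟨y, hy⟩ := F.map_yoneda_exact₁ Tr hTr (F.map e) (by rw [← F.map_comp, hd])
  obtain ⟨w, rfl⟩ := h₂' y
  obtain rfl : e = Tr.mor₁⟦(1 : ℤ)⟧' ≫ w := h₁' (by rw [hy, F.map_comp])
  rw [← Category.assoc, comp_distTriang_mor_zero₃₁ Tr hTr, zero_comp]

lemma surjective_map_from_obj₃ (Tr : Triangle C) (hTr : Tr ∈ distTriang C) (B : C)
    (h₁ : Function.Injective (F.map : (Tr.obj₁ ⟶ B) → _))
    (h₂ : Function.Surjective (F.map : (Tr.obj₂ ⟶ B) → _))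
    (h₁' : Function.Surjective (F.map : (Tr.obj₁⟦(1 : ℤ)⟧ ⟶ B) → _)) :
    Function.Surjective (F.map : (Tr.obj₃ ⟶ B) → _) := by
  intro φ
  obtain ⟨p, hp⟩ := h₂ (F.map Tr.mor₂ ≫ φ)
  obtain ⟨q, rfl⟩ := Triangle.yoneda_exact₂ Tr hTr p (injective_map_iff.1 h₁ _ (by
    rw [F.map_comp, hp, ← Category.assoc, ← F.map_comp, comp_distTriang_mor_zero₁₂ Tr hTr,
      F.map_zero, zero_comp]))
  obtain ⟨r, hr⟩ := F.map_yoneda_exact₃ Tr hTr (φ - F.map q)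
    (by rw [Preadditive.comp_sub, ← hp, F.map_comp, sub_self])
  obtain ⟨s, rfl⟩ := h₁' r
  exact ⟨q + Tr.mor₃ ≫ s, by rw [F.map_add, F.map_comp, ← hr]; abel⟩

namespace ShiftedHomBijective

lemma of_distTriang_right (Tr : Triangle C) (hTr : Tr ∈ distTriang C) {X : C}
    (h₁ : F.ShiftedHomBijective X Tr.obj₁) (h₂ : F.ShiftedHomBijective X Tr.obj₂) :
    F.ShiftedHomBijective X Tr.obj₃ := by
  intro a b
  have hTrb := Triangle.shift_distinguished Tr hTr b
  have h₁' := (h₁ a (b + 1)).of_iso_right ((shiftFunctorAdd C b 1).app Tr.obj₁)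
  have h₂' := (h₂ a (b + 1)).of_iso_right ((shiftFunctorAdd C b 1).app Tr.obj₂)
  exact ⟨injective_map_to_obj₃ _ hTrb _ (h₁ a b).2 (h₂ a b).1 h₁'.1,
    surjective_map_to_obj₃ _ hTrb _ (h₂ a b).2 h₁'.2 h₂'.1⟩

lemma of_distTriang_left (Tr : Triangle C) (hTr : Tr ∈ distTriang C) {Y : C}
    (h₁ : F.ShiftedHomBijective Tr.obj₁ Y) (h₂ : F.ShiftedHomBijective Tr.obj₂ Y) :
    F.ShiftedHomBijective Tr.obj₃ Y := by
  intro a b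
  have hTra := Triangle.shift_distinguished Tr hTr a
  have h₁' := (h₁ (a + 1) b).of_iso_left ((shiftFunctorAdd C a 1).app Tr.obj₁)
  have h₂' := (h₂ (a + 1) b).of_iso_left ((shiftFunctorAdd C a 1).app Tr.obj₂)
  exact ⟨injective_map_from_obj₃ _ hTra _ (h₂ a b).1 h₁'.1 h₂'.2,
    surjective_map_from_obj₃ _ hTra _ (h₁ a b).1 (h₂ a b).2 h₁'.2⟩

lemma of_thickClosure_right {S : Set C} {X : C} (hS : ∀ Y ∈ S, F.ShiftedHomBijective X Y)
    {Y : C} (hY : thickClosure S Y) : F.ShiftedHomBijective X Y := by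
  induction hY with
  | base hY => exact hS _ hY
  | zero hY => exact of_isZero_right hY
  | iso e _ ih => exact ih.of_iso_right e
  | shift n _ ih => exact ih.shift_right n
  | cone hTr _ _ ih₁ ih₂ => exact of_distTriang_right _ hTr ih₁ ih₂
  | summand _ hr ih =>
    obtain ⟨s, r, hsr⟩ := hr
    exact ih.of_retract_right ⟨s, r, hsr⟩

lemma of_thickClosure_left {S : Set C} {Y : C} (hS : ∀ X ∈ S, F.ShiftedHomBijective X Y)
    {X : C} (hX : thickClosure S X) : F.ShiftedHomBijective X Y := by
  induction hX with
  | base hX => exact hS _ hX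
  | zero hX => exact of_isZero_left hX
  | iso e _ ih => exact ih.of_iso_left e
  | shift n _ ih => exact ih.shift_left n
  | cone hTr _ _ ih₁ ih₂ => exact of_distTriang_left _ hTr ih₁ ih₂
  | summand _ hr ih =>
    obtain ⟨s, r, hsr⟩ := hr
    exact ih.of_retract_left ⟨s, r, hsr⟩

end ShiftedHomBijective

end

end CategoryTheory.Functor

/-- let `F : C ⥤ D` be a triangle functor between triangulated
categories and `T` an object of `C`.  If the induced map
`Hom_C(T, T⟦n⟧) → Hom_D(F T, (F T)⟦n⟧)`, sending `f` to `F.map f` followed by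
the shift-compatibility isomorphism of `F`, is bijective for every `n : ℤ`,
then the restriction of `F` to the smallest thick subcategory of `C`
containing `T` is fully faithful. -/
theorem stmt3
    {D : Type*} [Category D] [HasZeroObject D] [HasShift D ℤ]
    [Preadditive D] [∀ n : ℤ, (shiftFunctor D n).Additive] [Pretriangulated D]
    (F : C ⥤ D) [F.CommShift ℤ] [F.IsTriangulated] (T : C)
    (h : ∀ n : ℤ, Function.Bijective
      (fun f : T ⟶ T⟦n⟧ => F.map f ≫ (F.commShiftIso n).hom.app T)) :
    ∀ X Y : C, thickClosure {T} X → thickClosure {T} Y →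
      Function.Bijective (fun f : X ⟶ Y => F.map f) := by
  intro X Y hX hY
  have hTY : F.ShiftedHomBijective T Y := .of_thickClosure_right
    (by rintro _ rfl; exact F.shiftedHomBijective_self h) hY
  have hXY : F.ShiftedHomBijective X Y := .of_thickClosure_left
    (by rintro _ rfl; exact hTY) hX
  exact hXY.homBijective
end
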